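/- arXiv:1706.03481 — 2 statements merged into one kernel-verified Lean document; each statement's English description precedes it below -/
import Mathlib

section
/- The operator A_n, restricted to the antisymmetric subspace Λⁿ(H) of H^{⊗n}, is a unitary (surjective isometry) onto the antisymmetric subspace Λ^{d-n}(H) of H^{⊗(d-n)}, and it annihilates the orthogonal complement of Λⁿ(H). -/
/-- Antisymmetric subspace of `(ℂ^d)^{⊗m}`, modeled on `EuclideanSpace ℂ (Fin m → Fin d)`. -/
noncomputable def antisymE (d m : ℕ) : Submodule ℂ (EuclideanSpace ℂ (Fin m → Fin d)) where
  carrier := {v | ∀ σ : Equiv.Perm (Fin m),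
    (fun x => v (x ∘ σ)) = ((Equiv.Perm.sign σ : ℤ) : ℂ) • (v : (Fin m → Fin d) → ℂ)}
  add_mem' := by
    intro a b ha hb σ
    funext x
    have := congrFun (ha σ) x
    have := congrFun (hb σ) x
    simp_all [Pi.add_apply]
    ring
  zero_mem' := by intro σ; funext x; simp
  smul_mem' := by
    intro c a ha σ
    funext x
    have := congrFun (ha σ) x
    simp_all [Pi.smul_apply]
    ring

/-- The operator `A_n = (1/√((d-n)! n!)) ∑_{π ∈ S_d} sgn(π)
|e_{π(n+1)},…,e_{π(d)}⟩⟨e_{π(1)},…,e_{π(n)}|` as a matrix. -/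
noncomputable def matA (d n : ℕ) (hn : n ≤ d) :
    Matrix (Fin (d - n) → Fin d) (Fin n → Fin d) ℂ :=
  Matrix.of fun y x => ((Real.sqrt ((d - n).factorial * n.factorial) : ℂ))⁻¹ *
    ∑ π : Equiv.Perm (Fin d), ((Equiv.Perm.sign π : ℤ) : ℂ) *
      (if (∀ k : Fin (d - n), y k = π ⟨n + (k : ℕ), by have := k.isLt; omega⟩) ∧
          (∀ k : Fin n, x k = π (Fin.castLE hn k)) then 1 else 0)

/-- The linear action `v ↦ A_n v` of the operator `A_n`. -/
noncomputable def applyA (d n : ℕ) (hn : n ≤ d) (v : EuclideanSpace ℂ (Fin n → Fin d)) :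
    EuclideanSpace ℂ (Fin (d - n) → Fin d) :=
  WithLp.toLp 2 ((matA d n hn).mulVec v)

/-! Write `A_n = c⁻¹ M` with `c = √((d-n)! n!)`, where `M y x` is the sign of the (at most one)
permutation `π` of `Fin d` whose first `n` values are `x` and whose last `d - n` values are `y`.
The permutations with a given tail form a single coset of `Perm (Fin n)` acting on the head,
and on an antisymmetric `v` the factors `sign π` and `v (head π)` change sign together along it;
hence `(M v) (tail π) = n! · sign π · v (head π)`. As `(d - n)!` permutations have a given
injective head, `Mᵀ M = n! (d-n)!` on `Λⁿ`, and exchanging head and tail, `M Mᵀ = n! (d-n)!` on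
`Λ^{d-n}`. Since `M` is real, `A_n† = c⁻¹ Mᵀ`: it is a left inverse of `A_n` on `Λⁿ`, a right
inverse on `Λ^{d-n}`, and its range lies in `Λⁿ`, so `A_n` annihilates `(Λⁿ)ᗮ`. -/

open Equiv Equiv.Perm Finset Matrix
open scoped InnerProductSpace

namespace HodgeStar

variable {ι κ α : Type*}

section Perm

variable (e : ι ⊕ κ ≃ α)

def head (π : Perm α) : ι → α := fun i => π (e (Sum.inl i))

def tail (π : Perm α) : κ → α := fun k => π (e (Sum.inr k))

def swap : κ ⊕ ι ≃ α := (Equiv.sumComm κ ι).trans e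

lemma head_injective (π : Perm α) : Function.Injective (head e π) :=
  π.injective.comp (e.injective.comp Sum.inl_injective)

def blockPerm (τ : Perm ι) (σ : Perm κ) : Perm α := e.permCongr (τ.sumCongr σ)

@[simp] lemma head_mul_blockPerm (π : Perm α) (τ : Perm ι) (σ : Perm κ) :
    head e (π * blockPerm e τ σ) = head e π ∘ τ := by
  funext i; simp [head, blockPerm, permCongr_apply]

@[simp] lemma tail_mul_blockPerm (π : Perm α) (τ : Perm ι) (σ : Perm κ) :
    tail e (π * blockPerm e τ σ) = tail e π ∘ σ := by
  funext k; simp [tail, blockPerm, permCongr_apply]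

@[simp] lemma sign_blockPerm [Fintype ι] [Fintype κ] [DecidableEq ι] [DecidableEq κ]
    [Fintype α] [DecidableEq α] (τ : Perm ι) (σ : Perm κ) :
    sign (blockPerm e τ σ) = sign τ * sign σ := by
  rw [blockPerm, sign_permCongr, sign_sumCongr]

lemma exists_eq_mul_blockPerm_of_tail_eq [Finite ι] [Finite κ] {π π' : Perm α}
    (h : tail e π = tail e π') : ∃ τ : Perm ι, π' = π * blockPerm e τ 1 := by
  set g : Perm (ι ⊕ κ) := e.symm.permCongr (π⁻¹ * π')
  have hfix : ∀ k, g (Sum.inr k) = Sum.inr k := fun k => by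
    have := congrFun h k
    simp only [tail] at this
    simp [g, permCongr_apply, ← this]
  have hmaps : Set.MapsTo g (Set.range Sum.inr) (Set.range Sum.inr) := by
    rintro _ ⟨k, rfl⟩; exact ⟨k, (hfix k).symm⟩
  obtain ⟨⟨τ, σ⟩, hg⟩ := mem_sumCongrHom_range_of_perm_mapsTo_inl
    ((perm_mapsTo_inl_iff_mapsTo_inr g).mpr hmaps)
  have hσ : σ = 1 := by
    ext k
    have := hfix k
    rw [← hg] at this
    simpa using this
  refine ⟨τ, ?_⟩
  rw [blockPerm, ← hσ, show τ.sumCongr σ = g from hg]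
  ext a
  simp [g, permCongr_apply]

lemma card_tail_fiber [Fintype ι] [DecidableEq ι] [Fintype κ] [Fintype α] [DecidableEq α]
    (π : Perm α) : #{π' | tail e π = tail e π'} = (Fintype.card ι).factorial := by
  have hinj : Function.Injective fun τ : Perm ι => π * blockPerm e τ 1 := fun τ τ' h => by
    have := congrArg (head e) h
    simp only [head_mul_blockPerm] at this
    ext i
    rw [(Function.Injective.comp_left (head_injective e π)) this]
  have hfiber : ({π' | tail e π = tail e π'} : Finset (Perm α)) = univ.map ⟨_, hinj⟩ := by
    ext π'
    simp only [mem_filter, mem_univ, true_and, mem_map, Function.Embedding.coeFn_mk]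
    constructor
    · intro h
      obtain ⟨τ, rfl⟩ := exists_eq_mul_blockPerm_of_tail_eq e h
      exact ⟨τ, rfl⟩
    · rintro ⟨τ, rfl⟩
      simp
  rw [hfiber, card_map, card_univ, Fintype.card_perm]

lemma exists_head_eq [Finite α] {x : ι → α} (hx : Function.Injective x) :
    ∃ π : Perm α, head e π = x := by
  classical
  let f : {a // a ∈ Set.range (e ∘ Sum.inl)} ≃ {a // a ∈ Set.range x} :=
    (Equiv.ofInjective _ (e.injective.comp Sum.inl_injective)).symm.trans (Equiv.ofInjective x hx)
  refine ⟨f.extendSubtype, funext fun i => ?_⟩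
  rw [head, extendSubtype_apply_of_mem f (e (Sum.inl i)) ⟨i, rfl⟩]
  exact congrArg x (Equiv.ofInjective_symm_apply _ i)

lemma card_head_fiber [Fintype ι] [Fintype κ] [DecidableEq κ] [Fintype α] [DecidableEq α]
    {x : ι → α} (hx : Function.Injective x) :
    #{π | x = head e π} = (Fintype.card κ).factorial := by
  obtain ⟨π, rfl⟩ := exists_head_eq e hx
  exact card_tail_fiber (swap e) π

end Perm

section Matrix

lemma intCast_units_mul_self {R : Type*} [Ring R] (u : ℤˣ) :
    ((u : ℤ) : R) * ((u : ℤ) : R) = 1 := by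
  rw [← Int.cast_mul, ← Units.val_mul, Int.units_mul_self, Units.val_one, Int.cast_one]

variable (R : Type*) [CommRing R]

def IsAntisymmetric [Fintype ι] [DecidableEq ι] (f : (ι → α) → R) : Prop :=
  ∀ (σ : Perm ι) (x : ι → α), f (x ∘ σ) = ((sign σ : ℤ) : R) * f x

variable {R} in
lemma IsAntisymmetric.apply_eq_zero_of_not_injective [DecidableEq ι] [Fintype ι]
    [IsAddTorsionFree R] {f : (ι → α) → R}
    (hf : IsAntisymmetric R f) {x : ι → α} (hx : ¬ Function.Injective x) : f x = 0 := by
  obtain ⟨i, j, hxij, hij⟩ : ∃ i j, x i = x j ∧ i ≠ j := by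
    simpa [Function.Injective] using hx
  have hswap : x ∘ Equiv.swap i j = x := by
    funext k
    rcases eq_or_ne k i with rfl | hki
    · simp [hxij]
    rcases eq_or_ne k j with rfl | hkj
    · simp [hxij]
    · simp [swap_apply_of_ne_of_ne hki hkj]
  have := hf (Equiv.swap i j) x
  rw [hswap, sign_swap hij] at this
  exact self_eq_neg.mp (by simpa using this)

variable [Fintype ι] [Fintype κ] [Fintype α] [DecidableEq α] (e : ι ⊕ κ ≃ α)

def matrix : Matrix (κ → α) (ι → α) R :=
  Matrix.of fun y x => ∑ π : Perm α,
    if y = tail e π ∧ x = head e π then ((sign π : ℤ) : R) else 0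

lemma transpose_matrix : (matrix R e)ᵀ = matrix R (swap e) := by
  ext x y
  exact Finset.sum_congr rfl fun π _ => if_congr and_comm rfl rfl

lemma conjTranspose_matrix [StarRing R] : (matrix R e)ᴴ = matrix R (swap e) := by
  rw [← transpose_matrix]
  ext x y
  simp [matrix, star_sum, apply_ite]

variable [DecidableEq ι]

lemma matrix_mulVec_apply (v : (ι → α) → R) (y : κ → α) :
    (matrix R e *ᵥ v) y =
      ∑ π : Perm α, if y = tail e π then ((sign π : ℤ) : R) * v (head e π) else 0 := by
  simp only [Matrix.mulVec, dotProduct, matrix, Matrix.of_apply, Finset.sum_mul]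
  rw [Finset.sum_comm]
  refine Finset.sum_congr rfl fun π _ => ?_
  by_cases hy : y = tail e π <;> simp [hy]

lemma isAntisymmetric_matrix_mulVec [DecidableEq κ] (v : (ι → α) → R) :
    IsAntisymmetric R (matrix R e *ᵥ v) := by
  intro σ y
  rw [matrix_mulVec_apply, matrix_mulVec_apply, Finset.mul_sum]
  refine Fintype.sum_equiv (Equiv.mulRight (blockPerm e 1 σ⁻¹)) _ _ fun π => ?_
  have hcomp : y = tail e π ∘ ⇑σ⁻¹ ↔ y ∘ σ = tail e π := by
    rw [Perm.coe_inv, Equiv.eq_comp_symm]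
  simp only [coe_mulRight, tail_mul_blockPerm, head_mul_blockPerm, Perm.coe_one,
    Function.comp_id, Perm.sign_mul, sign_blockPerm, Perm.sign_one, sign_inv, one_mul, hcomp,
    mul_ite, mul_zero]
  refine if_congr Iff.rfl ?_ rfl
  push_cast
  linear_combination
    -((sign π : ℤ) : R) * v (head e π) * intCast_units_mul_self (R := R) (sign σ)

variable {R e} in
lemma matrix_mulVec_apply_tail [DecidableEq κ] {v : (ι → α) → R} (hv : IsAntisymmetric R v)
    (π : Perm α) :
    (matrix R e *ᵥ v) (tail e π) =
      (Fintype.card ι).factorial * (((sign π : ℤ) : R) * v (head e π)) := by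
  have hfiber : ∀ π' ∈ ({π' | tail e π = tail e π'} : Finset (Perm α)),
      ((sign π' : ℤ) : R) * v (head e π') = ((sign π : ℤ) : R) * v (head e π) := by
    intro π' hπ'
    obtain ⟨τ, rfl⟩ := exists_eq_mul_blockPerm_of_tail_eq e (mem_filter.mp hπ').2
    simp only [head_mul_blockPerm, Perm.sign_mul, sign_blockPerm, Perm.sign_one, mul_one, hv τ]
    push_cast
    linear_combination
      ((sign π : ℤ) : R) * v (head e π) * intCast_units_mul_self (R := R) (sign τ)
  rw [matrix_mulVec_apply, ← sum_filter, sum_congr rfl hfiber, sum_const, card_tail_fiber,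
    nsmul_eq_mul]

variable {R e} in
lemma transpose_matrix_mulVec_matrix_mulVec [DecidableEq κ] [IsAddTorsionFree R]
    {v : (ι → α) → R} (hv : IsAntisymmetric R v) :
    (matrix R e)ᵀ *ᵥ (matrix R e *ᵥ v) =
      (((Fintype.card ι).factorial * (Fintype.card κ).factorial : ℕ) : R) • v := by
  funext x
  have hterm : ∀ π : Perm α,
      (if x = head e π then ((sign π : ℤ) : R) * (matrix R e *ᵥ v) (tail e π) else 0) =
        if x = head e π then (Fintype.card ι).factorial * v x else 0 := by
    intro π
    split_ifs with hx
    · rw [matrix_mulVec_apply_tail hv, hx]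
      linear_combination ((Fintype.card ι).factorial * v (head e π) : R) *
        intCast_units_mul_self (R := R) (sign π)
    · rfl
  rw [transpose_matrix, matrix_mulVec_apply]
  refine (Fintype.sum_congr _ _ hterm).trans ?_
  rw [← sum_filter, sum_const, nsmul_eq_mul, Pi.smul_apply, smul_eq_mul]
  by_cases hx : Function.Injective x
  · rw [card_head_fiber e hx]
    push_cast
    ring
  · simp [hv.apply_eq_zero_of_not_injective hx]

end Matrix

end HodgeStar

section Exterior

open HodgeStar

variable {d n : ℕ}

def finSplit (hn : n ≤ d) : Fin n ⊕ Fin (d - n) ≃ Fin d :=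
  finSumFinEquiv.trans (finCongr (Nat.add_sub_cancel' hn))

lemma mem_antisymE_iff {m : ℕ} {v : EuclideanSpace ℂ (Fin m → Fin d)} :
    v ∈ antisymE d m ↔ IsAntisymmetric ℂ v.ofLp :=
  ⟨fun h σ x => congrFun (h σ) x, fun h σ => funext (h σ)⟩

lemma matA_eq (hn : n ≤ d) :
    matA d n hn = ((√((d - n).factorial * n.factorial) : ℝ) : ℂ)⁻¹ • matrix ℂ (finSplit hn) := by
  ext y x
  simp only [matA, matrix, Matrix.of_apply, Matrix.smul_apply, smul_eq_mul, mul_ite, mul_one,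
    mul_zero]
  congr 1
  exact sum_congr rfl fun π _ => if_congr (and_congr funext_iff.symm funext_iff.symm) rfl rfl

lemma inv_sqrt_factorial_mul_inv_mul (d n : ℕ) :
    ((√((d - n).factorial * n.factorial) : ℝ) : ℂ)⁻¹ *
      ((√((d - n).factorial * n.factorial) : ℝ) : ℂ)⁻¹ *
        (((d - n).factorial * n.factorial : ℕ) : ℂ) = 1 := by
  rw [← mul_inv, ← Complex.ofReal_mul, Real.mul_self_sqrt (by positivity)]
  norm_cast
  exact inv_mul_cancel₀ (Nat.cast_ne_zero.mpr (by positivity))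

lemma conjTranspose_matA (hn : n ≤ d) :
    (matA d n hn)ᴴ =
      ((√((d - n).factorial * n.factorial) : ℝ) : ℂ)⁻¹ • matrix ℂ (swap (finSplit hn)) := by
  rw [matA_eq, Matrix.conjTranspose_smul, conjTranspose_matrix, star_inv₀, Complex.star_def,
    Complex.conj_ofReal]

lemma conjTranspose_matA_mulVec_matA_mulVec (hn : n ≤ d) {v : (Fin n → Fin d) → ℂ}
    (hv : IsAntisymmetric ℂ v) : (matA d n hn)ᴴ *ᵥ (matA d n hn *ᵥ v) = v := by
  rw [conjTranspose_matA, matA_eq]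
  simp only [Matrix.smul_mulVec, Matrix.mulVec_smul, smul_smul]
  rw [← transpose_matrix, transpose_matrix_mulVec_matrix_mulVec hv, smul_smul, Fintype.card_fin,
    Fintype.card_fin, Nat.mul_comm, inv_sqrt_factorial_mul_inv_mul, one_smul]

lemma matA_mulVec_conjTranspose_matA_mulVec (hn : n ≤ d) {w : (Fin (d - n) → Fin d) → ℂ}
    (hw : IsAntisymmetric ℂ w) : matA d n hn *ᵥ ((matA d n hn)ᴴ *ᵥ w) = w := by
  rw [conjTranspose_matA, matA_eq]
  simp only [Matrix.smul_mulVec, Matrix.mulVec_smul, smul_smul]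
  rw [← transpose_transpose (matrix ℂ (finSplit hn)), transpose_matrix,
    transpose_matrix_mulVec_matrix_mulVec hw, smul_smul, Fintype.card_fin, Fintype.card_fin,
    inv_sqrt_factorial_mul_inv_mul, one_smul]

noncomputable def adjointA (hn : n ≤ d) (w : EuclideanSpace ℂ (Fin (d - n) → Fin d)) :
    EuclideanSpace ℂ (Fin n → Fin d) :=
  WithLp.toLp 2 ((matA d n hn)ᴴ *ᵥ w)

lemma inner_applyA_left (hn : n ≤ d) (v : EuclideanSpace ℂ (Fin n → Fin d))
    (w : EuclideanSpace ℂ (Fin (d - n) → Fin d)) :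
    ⟪applyA d n hn v, w⟫_ℂ = ⟪v, adjointA hn w⟫_ℂ := by
  rw [EuclideanSpace.inner_eq_star_dotProduct, EuclideanSpace.inner_eq_star_dotProduct,
    applyA, adjointA, Matrix.star_mulVec, dotProduct_comm, ← Matrix.dotProduct_mulVec,
    dotProduct_comm]

lemma applyA_mem_antisymE (hn : n ≤ d) (v : EuclideanSpace ℂ (Fin n → Fin d)) :
    applyA d n hn v ∈ antisymE d (d - n) := by
  rw [applyA, matA_eq, Matrix.smul_mulVec, WithLp.toLp_smul]
  exact Submodule.smul_mem _ _ (mem_antisymE_iff.mpr (isAntisymmetric_matrix_mulVec _ _ _))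

lemma adjointA_mem_antisymE (hn : n ≤ d) (w : EuclideanSpace ℂ (Fin (d - n) → Fin d)) :
    adjointA hn w ∈ antisymE d n := by
  rw [adjointA, conjTranspose_matA, Matrix.smul_mulVec, WithLp.toLp_smul]
  exact Submodule.smul_mem _ _ (mem_antisymE_iff.mpr (isAntisymmetric_matrix_mulVec _ _ _))

lemma adjointA_applyA (hn : n ≤ d) {v : EuclideanSpace ℂ (Fin n → Fin d)}
    (hv : v ∈ antisymE d n) : adjointA hn (applyA d n hn v) = v :=
  congrArg (WithLp.toLp 2) (conjTranspose_matA_mulVec_matA_mulVec hn (mem_antisymE_iff.mp hv))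

lemma applyA_adjointA (hn : n ≤ d) {w : EuclideanSpace ℂ (Fin (d - n) → Fin d)}
    (hw : w ∈ antisymE d (d - n)) : applyA d n hn (adjointA hn w) = w :=
  congrArg (WithLp.toLp 2)
    (matA_mulVec_conjTranspose_matA_mulVec hn (mem_antisymE_iff.mp hw))

end Exterior

theorem stmt5_general (d n : ℕ) (hn : n ≤ d) :
    (∀ v ∈ antisymE d n, applyA d n hn v ∈ antisymE d (d - n)) ∧
    (∀ v ∈ antisymE d n, ‖applyA d n hn v‖ = ‖v‖) ∧
    (∀ w ∈ antisymE d (d - n), ∃ v ∈ antisymE d n, applyA d n hn v = w) ∧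
    (∀ v ∈ (antisymE d n)ᗮ, applyA d n hn v = 0) := by
  refine ⟨fun v _ => applyA_mem_antisymE hn v, fun v hv => ?_,
    fun w hw => ⟨adjointA hn w, adjointA_mem_antisymE hn w, applyA_adjointA hn hw⟩,
    fun v hv => ?_⟩
  · have h : ⟪applyA d n hn v, applyA d n hn v⟫_ℂ = ⟪v, v⟫_ℂ := by
      rw [inner_applyA_left, adjointA_applyA hn hv]
    rw [inner_self_eq_norm_sq_to_K, inner_self_eq_norm_sq_to_K] at h
    exact (sq_eq_sq₀ (norm_nonneg _) (norm_nonneg _)).mp (by exact_mod_cast h)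
  · rw [← inner_self_eq_zero (𝕜 := ℂ), inner_applyA_left]
    exact Submodule.inner_left_of_mem_orthogonal (adjointA_mem_antisymE hn _) hv

/-- `A_n` restricted to the antisymmetric subspace `Λⁿ(H)` of `H^{⊗n}` is a
surjective isometry onto the antisymmetric subspace `Λ^{d-n}(H)` of `H^{⊗(d-n)}`, and it
annihilates the orthogonal complement of `Λⁿ(H)`. -/
theorem stmt5 (d n : ℕ) (h0 : 0 < n) (hnd : n < d) (hn : n ≤ d) :
    (∀ v ∈ antisymE d n, applyA d n hn v ∈ antisymE d (d - n)) ∧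
    (∀ v ∈ antisymE d n, ‖applyA d n hn v‖ = ‖v‖) ∧
    (∀ w ∈ antisymE d (d - n), ∃ v ∈ antisymE d n, applyA d n hn v = w) ∧
    (∀ v ∈ (antisymE d n)ᗮ, applyA d n hn v = 0) :=
  stmt5_general d n hn
end

section
/- For any state ρ supported on the antisymmetric subspace of H^{⊗n} and any unitary U on H, A_n† (U^{⊗(d-n)} (A_n ρ A_n†) (U†)^{⊗(d-n)}) A_n = (U*)^{⊗n} ρ (U^T)^{⊗n}. In other words, encoding with A_n, applying d-n parallel uses of U, and decoding with A_n† implements the conjugate unitary (U*)^{⊗n} on antisymmetric states. -/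
open Matrix
open scoped ComplexOrder

/-- The `m`-fold tensor power `U^{⊗m}` of a `d × d` matrix. -/
def tpow {d : ℕ} (m : ℕ) (U : Matrix (Fin d) (Fin d) ℂ) :
    Matrix (Fin m → Fin d) (Fin m → Fin d) ℂ :=
  Matrix.of fun x y => ∏ k, U (x k) (y k)

/-- The antisymmetrizer `(1/n!) ∑_{σ ∈ S_n} sgn(σ) P_σ`, the orthogonal projector onto the
antisymmetric subspace of `(ℂ^d)^{⊗n}`. -/
noncomputable def antiProj (d n : ℕ) : Matrix (Fin n → Fin d) (Fin n → Fin d) ℂ :=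
  ((n.factorial : ℂ))⁻¹ • ∑ σ : Equiv.Perm (Fin n), ((Equiv.Perm.sign σ : ℤ) : ℂ) •
    Matrix.of (fun x y : Fin n → Fin d => if y = x ∘ σ then (1 : ℂ) else 0)

/-!
Up to the factor `(√((d-n)! n!))⁻¹`, the entry of `A_n` at `(y, x)` is the Levi-Civita symbol of
the concatenated index string `(x, y)`. Two identities for this symbol give the theorem.
Expanding the determinant of the rows of `U` indexed by `(x, y)`, which is `ε(x, y) · det U`,
shows `U^{⊗(d-n)} A_n (Uᵀ)^{⊗n} = det U • A_n`, hence `U^{⊗(d-n)} A_n = det U • A_n (U^*)^{⊗n}`.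
Contracting two Levi-Civita symbols over their last `d - n` indices gives `(d-n)!` times the
signed sum of the permutation operators of `S_n`, so `A_n† A_n` is the antisymmetric projector
`P`. Since `P` commutes with tensor powers, fixes `ρ` from both sides, and `|det U| = 1`, the
left-hand side collapses to `(U^*)^{⊗n} ρ (Uᵀ)^{⊗n}`.
-/

open Equiv Finset

section Permutations

variable {α β κ : Type*} [Fintype α] [Fintype β] [Fintype κ] [DecidableEq κ]

theorem sum_perm_fixing_inr [DecidableEq α] (e : α ⊕ β ≃ κ) {M : Type*} [AddCommMonoid M]
    (f : Perm κ → M) :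
    ∑ τ ∈ univ.filter fun τ : Perm κ => ⇑τ ∘ e ∘ Sum.inr = e ∘ Sum.inr, f τ =
      ∑ σ : Perm α, f (e.permCongr (σ.sumCongr 1)) := by
  symm
  refine sum_nbij (fun σ => e.permCongr (σ.sumCongr 1)) (by simp [funext_iff]) ?_ ?_ (by simp)
  · intro σ₁ _ σ₂ _ h
    have h' : Perm.sumCongrHom α β (σ₁, 1) = Perm.sumCongrHom α β (σ₂, 1) :=
      e.permCongr.injective h
    exact congrArg Prod.fst (Perm.sumCongrHom_injective h')
  · intro τ hτ
    simp only [coe_filter, mem_univ, true_and, Set.mem_ofPred_eq, funext_iff,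
      Function.comp_apply] at hτ
    have hmaps : Set.MapsTo (e.symm.permCongr τ) (Set.range Sum.inl) (Set.range Sum.inl) := by
      rintro _ ⟨a, rfl⟩
      rcases h : e.symm (τ (e (.inl a))) with a' | b
      · exact ⟨a', by simp [h]⟩
      · rw [e.symm_apply_eq, ← hτ b, τ.apply_eq_iff_eq, e.apply_eq_iff_eq] at h
        exact absurd h Sum.inl_ne_inr
    obtain ⟨⟨σ, σ'⟩, hσ⟩ := Perm.mem_sumCongrHom_range_of_perm_mapsTo_inl hmaps
    have hσ' : σ' = 1 := by
      ext b
      simpa [hτ] using congr($hσ (.inr b))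
    refine ⟨σ, mem_univ _, ?_⟩
    change e.permCongr (Perm.sumCongrHom α β (σ, 1)) = τ
    rw [← hσ', hσ]
    ext; simp

theorem card_perm_comp_inl_eq [DecidableEq α] [DecidableEq β] (e : α ⊕ β ≃ κ) {x : α → κ}
    (hx : Function.Injective x) :
    #{π : Perm κ | x = ⇑π ∘ e ∘ Sum.inl} = (Fintype.card β).factorial := by
  -- left multiplication by an extension `π₀` of `x` identifies this set with the pointwise
  -- stabiliser of `e ∘ inl`
  obtain ⟨π₀, hπ₀⟩ := Perm.exists_extending_pair (e ∘ Sum.inl) x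
    (e.injective.comp Sum.inl_injective) hx
  let e' : β ⊕ α ≃ κ := (sumComm β α).trans e
  have hmul (τ : Perm κ) : x = ⇑(π₀ * τ) ∘ e ∘ Sum.inl ↔ ⇑τ ∘ e' ∘ Sum.inr = e' ∘ Sum.inr := by
    simp [e', funext_iff, ← hπ₀, eq_comm]
  calc #{π : Perm κ | x = ⇑π ∘ e ∘ Sum.inl}
      = #{τ : Perm κ | ⇑τ ∘ e' ∘ Sum.inr = e' ∘ Sum.inr} := by
        refine card_nbij' (π₀⁻¹ * ·) (π₀ * ·) (fun π hπ => ?_) (fun τ hτ => ?_)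
          (fun π _ => mul_inv_cancel_left π₀ π) (fun τ _ => inv_mul_cancel_left π₀ τ)
        · simp only [coe_filter, mem_univ, true_and, Set.mem_ofPred_eq] at hπ ⊢
          rwa [← hmul, mul_inv_cancel_left]
        · simp only [coe_filter, mem_univ, true_and, Set.mem_ofPred_eq] at hτ ⊢
          rwa [hmul]
    _ = ∑ σ : Perm β, 1 := by
        rw [card_eq_sum_ones, sum_perm_fixing_inr e' (fun _ => 1)]
    _ = _ := by simp [Fintype.card_perm]

theorem det_submatrix_eq_sum_sign_mul_det (U : Matrix κ κ ℂ) (w : κ → κ) :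
    (U.submatrix w id).det = (∑ π : Perm κ, ((Perm.sign π : ℤ) : ℂ) * if w = ⇑π then 1 else 0) *
      U.det := by
  by_cases hw : Function.Injective w
  · obtain ⟨σ, rfl⟩ : ∃ σ : Perm κ, ⇑σ = w :=
      ⟨Equiv.ofBijective w (Finite.injective_iff_bijective.1 hw), rfl⟩
    rw [Matrix.det_permute, sum_eq_single σ (fun π _ hπ => by simp [Ne.symm hπ])
      (by simp)]
    simp
  · obtain ⟨i, j, hij, hne⟩ := Function.not_injective_iff.1 hw
    rw [Matrix.det_zero_of_row_eq hne (by ext; simp [hij]), sum_eq_zero, zero_mul]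
    rintro π -
    rw [if_neg (fun h => hne (by simpa [h] using hij)), mul_zero]

end Permutations

section SignedPermSum

variable {α κ : Type*} [Fintype α] [DecidableEq α] [DecidableEq κ]

variable (α κ) in
noncomputable def signedPermSum : Matrix (α → κ) (α → κ) ℂ :=
  ∑ σ : Perm α, ((Perm.sign σ : ℤ) : ℂ) • Matrix.of fun x y : α → κ => if y = x ∘ σ then 1 else 0

theorem signedPermSum_apply (x y : α → κ) :
    signedPermSum α κ x y =
      ∑ σ : Perm α, ((Perm.sign σ : ℤ) : ℂ) * if y = x ∘ σ then 1 else 0 := by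
  simp [signedPermSum, Matrix.sum_apply]

theorem signedPermSum_apply_eq_det (x y : α → κ) :
    signedPermSum α κ x y = (Matrix.of fun i j => if y j = x i then (1 : ℂ) else 0).det := by
  rw [signedPermSum_apply, Matrix.det_apply']
  refine sum_congr rfl fun σ _ => ?_
  simp [prod_ite_zero, funext_iff]

theorem signedPermSum_apply_of_not_injective {x : α → κ} (hx : ¬ Function.Injective x)
    (y : α → κ) : signedPermSum α κ x y = 0 := by
  obtain ⟨i, j, hij, hne⟩ := Function.not_injective_iff.1 hx
  rw [signedPermSum_apply_eq_det]
  exact Matrix.det_zero_of_row_eq hne (by ext; simp [hij])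

end SignedPermSum

section LeviCivita

variable {α β κ : Type*} [Fintype α] [Fintype β] [Fintype κ] [DecidableEq κ]

/-- The entry at `(y, x)` is the Levi-Civita symbol of `Sum.elim x y ∘ e.symm`. -/
noncomputable def leviCivitaMatrix (e : α ⊕ β ≃ κ) : Matrix (β → κ) (α → κ) ℂ :=
  Matrix.of fun y x => ∑ π : Perm κ, ((Perm.sign π : ℤ) : ℂ) *
    if y = ⇑π ∘ e ∘ Sum.inr ∧ x = ⇑π ∘ e ∘ Sum.inl then 1 else 0

variable (e : α ⊕ β ≃ κ)

theorem star_leviCivitaMatrix_apply (y : β → κ) (x : α → κ) :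
    star (leviCivitaMatrix e y x) = leviCivitaMatrix e y x := by
  simp [leviCivitaMatrix, star_sum, apply_ite]

theorem sum_leviCivitaMatrix_apply_mul [DecidableEq β] (x : α → κ) (F : (β → κ) → ℂ) :
    ∑ y, leviCivitaMatrix e y x * F y = ∑ π : Perm κ, ((Perm.sign π : ℤ) : ℂ) *
      if x = ⇑π ∘ e ∘ Sum.inl then F (⇑π ∘ e ∘ Sum.inr) else 0 := by
  simp only [leviCivitaMatrix, Matrix.of_apply, sum_mul]
  rw [sum_comm]
  refine sum_congr rfl fun π _ => ?_
  simp [ite_and]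

theorem sum_sum_mul_leviCivitaMatrix_apply_mul [DecidableEq α] [DecidableEq β]
    (F : (β → κ) → ℂ) (G : (α → κ) → ℂ) :
    ∑ y, ∑ x, F y * leviCivitaMatrix e y x * G x =
      ∑ π : Perm κ, ((Perm.sign π : ℤ) : ℂ) * (F (⇑π ∘ e ∘ Sum.inr) * G (⇑π ∘ e ∘ Sum.inl)) := by
  calc ∑ y, ∑ x, F y * leviCivitaMatrix e y x * G x
      = ∑ x, (∑ y, leviCivitaMatrix e y x * F y) * G x := by
        rw [sum_comm]
        simp only [sum_mul, mul_comm (F _)]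
    _ = _ := by
        simp only [sum_leviCivitaMatrix_apply_mul, sum_mul]
        rw [sum_comm]
        simp [mul_assoc]

theorem leviCivitaMatrix_apply_perm_comp [DecidableEq α] [DecidableEq β] (π : Perm κ) (x : α → κ) :
    leviCivitaMatrix e (⇑π ∘ e ∘ Sum.inr) x =
      (Perm.sign π : ℂ) * signedPermSum α κ (⇑π ∘ e ∘ Sum.inl) x := by
  have hfix (τ : Perm κ) :
      ⇑π ∘ e ∘ Sum.inr = ⇑(π * τ) ∘ e ∘ Sum.inr ↔ ⇑τ ∘ e ∘ Sum.inr = e ∘ Sum.inr := by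
    rw [Perm.coe_mul, Function.comp_assoc, eq_comm]
    exact π.injective.comp_left.eq_iff
  have hext (σ : Perm α) : ⇑(e.permCongr (σ.sumCongr 1)) ∘ e ∘ Sum.inl = e ∘ Sum.inl ∘ σ := by
    ext; simp
  rw [leviCivitaMatrix, Matrix.of_apply, ← Equiv.sum_comp (Equiv.mulLeft π)]
  simp only [coe_mulLeft, ite_and, hfix, mul_ite, mul_zero]
  rw [← sum_filter, sum_perm_fixing_inr, signedPermSum_apply, mul_sum]
  refine sum_congr rfl fun σ _ => ?_
  simp [Perm.sign_permCongr, Perm.sign_sumCongr, Function.comp_assoc, hext]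

theorem conjTranspose_leviCivitaMatrix_mul_self [DecidableEq α] [DecidableEq β] :
    (leviCivitaMatrix e)ᴴ * leviCivitaMatrix e =
      ((Fintype.card β).factorial : ℂ) • signedPermSum α κ := by
  ext x x'
  have hsign (π : Perm κ) : ((Perm.sign π : ℤ) : ℂ) * (Perm.sign π : ℂ) = 1 := by
    rw [← Int.cast_mul, ← Units.val_mul, Int.units_mul_self, Units.val_one, Int.cast_one]
  simp only [Matrix.mul_apply, Matrix.conjTranspose_apply, star_leviCivitaMatrix_apply,
    sum_leviCivitaMatrix_apply_mul, leviCivitaMatrix_apply_perm_comp, Matrix.smul_apply,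
    smul_eq_mul]
  calc ∑ π : Perm κ, ((Perm.sign π : ℤ) : ℂ) * (if x = ⇑π ∘ e ∘ Sum.inl then
          (Perm.sign π : ℂ) * signedPermSum α κ (⇑π ∘ e ∘ Sum.inl) x' else 0)
      = ∑ π : Perm κ, if x = ⇑π ∘ e ∘ Sum.inl then signedPermSum α κ x x' else 0 := by
        refine sum_congr rfl fun π _ => ?_
        split_ifs with h
        · rw [← h, ← mul_assoc, hsign, one_mul]
        · rw [mul_zero]
    _ = _ := by
        rw [sum_ite, sum_const_zero, add_zero, sum_const, nsmul_eq_mul]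
        by_cases hx : Function.Injective x
        · rw [card_perm_comp_inl_eq e hx]
        · rw [signedPermSum_apply_of_not_injective hx, mul_zero, mul_zero]

end LeviCivita

section TensorPower

variable {d : ℕ}

theorem tpow_mul (m : ℕ) (U V : Matrix (Fin d) (Fin d) ℂ) :
    tpow m U * tpow m V = tpow m (U * V) := by
  ext x y
  simp only [Matrix.mul_apply, tpow, Matrix.of_apply, prod_univ_sum, Fintype.piFinset_univ,
    prod_mul_distrib]

theorem tpow_one (m : ℕ) : tpow m (1 : Matrix (Fin d) (Fin d) ℂ) = 1 := by
  ext x y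
  simp [tpow, Matrix.one_apply, prod_boole, funext_iff]

theorem conjTranspose_tpow (m : ℕ) (U : Matrix (Fin d) (Fin d) ℂ) : (tpow m U)ᴴ = tpow m Uᴴ := by
  ext x y
  simp [tpow, Matrix.conjTranspose_apply]

theorem tpow_apply_comp_comp {m : ℕ} (U : Matrix (Fin d) (Fin d) ℂ) (σ : Perm (Fin m))
    (x y : Fin m → Fin d) : tpow m U (x ∘ σ) (y ∘ σ) = tpow m U x y :=
  Equiv.prod_comp σ fun k => U (x k) (y k)

theorem signedPermSum_mul_tpow_comm {m : ℕ} (U : Matrix (Fin d) (Fin d) ℂ) :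
    signedPermSum (Fin m) (Fin d) * tpow m U = tpow m U * signedPermSum (Fin m) (Fin d) := by
  simp only [signedPermSum, Matrix.sum_mul, Matrix.mul_sum, Matrix.smul_mul, Matrix.mul_smul]
  refine sum_congr rfl fun σ _ => ?_
  congr 1
  ext x y
  have hcomp (z : Fin m → Fin d) : y = z ∘ σ ↔ z = y ∘ σ.symm := by
    rw [eq_comm, ← Equiv.eq_comp_symm]
  simp only [Matrix.mul_apply, Matrix.of_apply, ite_mul, one_mul, zero_mul, mul_ite, mul_one,
    mul_zero, hcomp, sum_ite_eq', mem_univ, if_true]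
  rw [← tpow_apply_comp_comp U σ x]
  simp [Function.comp_assoc]

theorem tpow_mul_leviCivitaMatrix_mul_tpow_transpose {n m : ℕ} (e : Fin n ⊕ Fin m ≃ Fin d)
    (U : Matrix (Fin d) (Fin d) ℂ) :
    tpow m U * leviCivitaMatrix e * tpow n Uᵀ = U.det • leviCivitaMatrix e := by
  ext b a
  let w : Fin d → Fin d := Sum.elim a b ∘ e.symm
  have hw (π : Perm (Fin d)) : w = ⇑π ↔ b = ⇑π ∘ e ∘ Sum.inr ∧ a = ⇑π ∘ e ∘ Sum.inl := by
    rw [Equiv.comp_symm_eq, ← Sum.elim_comp_inl_inr (⇑π ∘ e), Sum.elim_eq_iff, and_comm]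
    rfl
  have hprod (π : Perm (Fin d)) : tpow m U b (⇑π ∘ e ∘ Sum.inr) * tpow n Uᵀ (⇑π ∘ e ∘ Sum.inl) a =
      ∏ i, U (w i) (π i) := by
    rw [← e.prod_comp, Fintype.prod_sum_type, mul_comm]
    simp [tpow, w]
  calc (tpow m U * leviCivitaMatrix e * tpow n Uᵀ) b a
      = ∑ π : Perm (Fin d), ((Perm.sign π : ℤ) : ℂ) * ∏ i, U (w i) (π i) := by
        simp only [Matrix.mul_apply, sum_mul]
        rw [sum_comm, sum_sum_mul_leviCivitaMatrix_apply_mul]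
        simp only [hprod]
    _ = (U.submatrix w id).det := by
        rw [← Matrix.det_transpose, Matrix.det_apply']
        rfl
    _ = (U.det • leviCivitaMatrix e) b a := by
        rw [det_submatrix_eq_sum_sign_mul_det, Matrix.smul_apply, smul_eq_mul, mul_comm]
        simp only [leviCivitaMatrix, Matrix.of_apply, hw]

end TensorPower

section Encoding

variable {d n : ℕ}

-- `splitEquiv hn` sends `inl k` to `k` and `inr k` to `n + k` definitionally, as in `matA`.
def splitEquiv (hn : n ≤ d) : Fin n ⊕ Fin (d - n) ≃ Fin d :=
  finSumFinEquiv.trans (finCongr (Nat.add_sub_cancel' hn))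

theorem matA_eq_smul (hn : n ≤ d) :
    matA d n hn = (Real.sqrt ((d - n).factorial * n.factorial) : ℂ)⁻¹ •
      leviCivitaMatrix (splitEquiv hn) := by
  ext y x
  simp only [matA, leviCivitaMatrix, Matrix.of_apply, Matrix.smul_apply, smul_eq_mul, funext_iff,
    Function.comp_apply]
  rfl

theorem antiProj_eq_smul : antiProj d n = (n.factorial : ℂ)⁻¹ • signedPermSum (Fin n) (Fin d) :=
  rfl

theorem conjTranspose_matA_mul_matA (hn : n ≤ d) : (matA d n hn)ᴴ * matA d n hn = antiProj d n := by
  have hc : star (Real.sqrt ((d - n).factorial * n.factorial) : ℂ)⁻¹ *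
      (Real.sqrt ((d - n).factorial * n.factorial) : ℂ)⁻¹ * (d - n).factorial =
        (n.factorial : ℂ)⁻¹ := by
    rw [star_inv₀, Complex.star_def, Complex.conj_ofReal, ← mul_inv, ← Complex.ofReal_mul,
      Real.mul_self_sqrt (by positivity)]
    push_cast
    field_simp
  rw [matA_eq_smul, Matrix.conjTranspose_smul, Matrix.smul_mul, Matrix.mul_smul,
    conjTranspose_leviCivitaMatrix_mul_self, smul_smul, smul_smul, Fintype.card_fin, hc,
    antiProj_eq_smul]

theorem antiProj_mul_tpow_comm (U : Matrix (Fin d) (Fin d) ℂ) :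
    antiProj d n * tpow n U = tpow n U * antiProj d n := by
  rw [antiProj_eq_smul, Matrix.smul_mul, Matrix.mul_smul, signedPermSum_mul_tpow_comm]

theorem tpow_mul_matA_mul_tpow_transpose (hn : n ≤ d) (U : Matrix (Fin d) (Fin d) ℂ) :
    tpow (d - n) U * matA d n hn * tpow n Uᵀ = U.det • matA d n hn := by
  rw [matA_eq_smul, Matrix.mul_smul, Matrix.smul_mul, tpow_mul_leviCivitaMatrix_mul_tpow_transpose,
    smul_comm]

theorem conjTranspose_matA_mul_tpow_mul_matA (hn : n ≤ d) {U : Matrix (Fin d) (Fin d) ℂ}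
    (hU : U ∈ Matrix.unitaryGroup (Fin d) ℂ) :
    (matA d n hn)ᴴ * tpow (d - n) U * matA d n hn =
      U.det • (tpow n (U.map (starRingEnd ℂ)) * antiProj d n) := by
  have hinv : tpow n Uᵀ * tpow n (U.map (starRingEnd ℂ)) = 1 := by
    rw [tpow_mul, show U.map (starRingEnd ℂ) = (star U)ᵀ from rfl, ← Matrix.transpose_mul,
      Matrix.mem_unitaryGroup_iff'.1 hU, Matrix.transpose_one, tpow_one]
  calc (matA d n hn)ᴴ * tpow (d - n) U * matA d n hn
      = (matA d n hn)ᴴ * (tpow (d - n) U * matA d n hn * tpow n Uᵀ) *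
          tpow n (U.map (starRingEnd ℂ)) := by
        simp only [Matrix.mul_assoc, hinv, Matrix.mul_one]
    _ = U.det • (tpow n (U.map (starRingEnd ℂ)) * antiProj d n) := by
        rw [tpow_mul_matA_mul_tpow_transpose, Matrix.mul_smul, Matrix.smul_mul,
          conjTranspose_matA_mul_matA, antiProj_mul_tpow_comm]

end Encoding

theorem stmt7_general (d n : ℕ) (hn : n ≤ d)
    (U : Matrix (Fin d) (Fin d) ℂ) (hU : U ∈ Matrix.unitaryGroup (Fin d) ℂ)
    (ρ : Matrix (Fin n → Fin d) (Fin n → Fin d) ℂ)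
    (hsupp₁ : antiProj d n * ρ = ρ) (hsupp₂ : ρ * antiProj d n = ρ) :
    (matA d n hn)ᴴ *
        (tpow (d - n) U * (matA d n hn * ρ * (matA d n hn)ᴴ) * (tpow (d - n) U)ᴴ) *
        matA d n hn =
      tpow n (U.map (starRingEnd ℂ)) * ρ * tpow n Uᵀ := by
  have hdet : star U.det * U.det = 1 := Unitary.star_mul_self_of_mem (Matrix.det_of_mem_unitary hU)
  have hstar : (star U).map (starRingEnd ℂ) = Uᵀ := by ext; simp
  have hρ : antiProj d n * ρ * antiProj d n = ρ := by rw [hsupp₁, hsupp₂]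
  calc (matA d n hn)ᴴ *
        (tpow (d - n) U * (matA d n hn * ρ * (matA d n hn)ᴴ) * (tpow (d - n) U)ᴴ) * matA d n hn
      = ((matA d n hn)ᴴ * tpow (d - n) U * matA d n hn) * ρ *
          ((matA d n hn)ᴴ * tpow (d - n) (star U) * matA d n hn) := by
        simp only [conjTranspose_tpow, Matrix.star_eq_conjTranspose, Matrix.mul_assoc]
    _ = (U.det • (tpow n (U.map (starRingEnd ℂ)) * antiProj d n)) * ρ *
          (star U.det • (antiProj d n * tpow n Uᵀ)) := by
        rw [conjTranspose_matA_mul_tpow_mul_matA hn hU,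
          conjTranspose_matA_mul_tpow_mul_matA hn (Unitary.star_mem hU), hstar,
          Matrix.star_eq_conjTranspose, Matrix.det_conjTranspose, antiProj_mul_tpow_comm]
    _ = (star U.det * U.det) •
          (tpow n (U.map (starRingEnd ℂ)) * (antiProj d n * ρ * antiProj d n) * tpow n Uᵀ) := by
        simp only [Matrix.smul_mul, Matrix.mul_smul, smul_smul, Matrix.mul_assoc]
    _ = tpow n (U.map (starRingEnd ℂ)) * ρ * tpow n Uᵀ := by rw [hρ, hdet, one_smul]

/-- For any state `ρ` supported on the antisymmetric subspace of `H^{⊗n}`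
and any unitary `U` on `H = ℂ^d`:
`A_n† (U^{⊗(d-n)} (A_n ρ A_n†) (U†)^{⊗(d-n)}) A_n = (U^*)^{⊗n} ρ (Uᵀ)^{⊗n}`,
i.e. encoding with `A_n`, applying `d-n` parallel uses of `U` and decoding with `A_n†`
implements the conjugate unitary on antisymmetric states. -/
theorem stmt7 (d n : ℕ) (h0 : 0 < n) (hnd : n < d) (hn : n ≤ d)
    (U : Matrix (Fin d) (Fin d) ℂ) (hU : U ∈ Matrix.unitaryGroup (Fin d) ℂ)
    (ρ : Matrix (Fin n → Fin d) (Fin n → Fin d) ℂ) (hρ : ρ.PosSemidef) (htr : ρ.trace = 1)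
    (hsupp₁ : antiProj d n * ρ = ρ) (hsupp₂ : ρ * antiProj d n = ρ) :
    (matA d n hn)ᴴ *
        (tpow (d - n) U * (matA d n hn * ρ * (matA d n hn)ᴴ) * (tpow (d - n) U)ᴴ) *
        matA d n hn =
      tpow n (U.map (starRingEnd ℂ)) * ρ * tpow n Uᵀ :=
  stmt7_general d n hn U hU ρ hsupp₁ hsupp₂
end
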